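/- arXiv:2311.09384 — 6 statements merged into one kernel-verified Lean document; each statement's English description precedes it below -/
import Mathlib

section
/- Let α₁ < α₂ < ... < αₙ be real numbers and 0 < x₁ < x₂ < ... < xₙ. Then the determinant of the n×n generalized (exponential) Vandermonde matrix with (i,j) entry x_j^{α_i} is strictly positive. -/
/-!
A nonzero generalized polynomial `∑ cᵢ t^{αᵢ}` with `n` exponents has at most `n - 1` positive
zeros: after dividing by `t^{α₀}`, Rolle's theorem produces `n - 1` zeros of the derivative, which
is a generalized polynomial with `n - 1` exponents. Hence the generalized Vandermonde determinant
never vanishes. Deforming the exponents linearly into `0, 1, …, n - 1` keeps them increasing, so the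
determinant keeps its sign along the way, and at the end it is an ordinary Vandermonde determinant,
which is a product of positive differences.
-/

open Matrix Set

lemma StrictMono.one_sub_mul_add_mul {ι : Type*} [PartialOrder ι] {f g : ι → ℝ}
    (hf : StrictMono f) (hg : StrictMono g) {s : ℝ} (hs : s ∈ Icc 0 1) :
    StrictMono fun i => (1 - s) * f i + s * g i := by
  rcases hs.2.lt_or_eq with hs1 | rfl
  · exact (hf.const_mul (by linarith)).add_monotone (hg.monotone.const_mul hs.1)
  · simpa using hg

lemma hasDerivAt_sum_mul_rpow {ι : Type*} [Fintype ι] (c β : ι → ℝ) {t : ℝ} (ht : 0 < t) :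
    HasDerivAt (fun t => ∑ i, c i * t ^ β i) (∑ i, c i * β i * t ^ (β i - 1)) t := by
  refine HasDerivAt.fun_sum fun i _ => ?_
  simpa [mul_assoc] using ((Real.hasDerivAt_rpow_const (p := β i) (Or.inl ht.ne')).const_mul (c i))

lemma exists_strictMono_deriv_eq_zero {m : ℕ} {f f' : ℝ → ℝ} {u : Fin (m + 1) → ℝ}
    (hu : StrictMono u) (hf : ∀ t, u 0 ≤ t → HasDerivAt f (f' t) t) (hzero : ∀ j, f (u j) = 0) :
    ∃ v : Fin m → ℝ, StrictMono v ∧ (∀ k, v k ∈ Ioo (u k.castSucc) (u k.succ)) ∧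
      ∀ k, f' (v k) = 0 := by
  have hf' : ∀ t ∈ Ici (u 0), HasDerivAt f (f' t) t := hf
  have hrolle (k : Fin m) : ∃ v ∈ Ioo (u k.castSucc) (u k.succ), f' v = 0 := by
    have hIcc : Icc (u k.castSucc) (u k.succ) ⊆ Ici (u 0) :=
      Icc_subset_Ici_self.trans (Ici_subset_Ici.mpr (hu.monotone (Fin.zero_le _)))
    exact exists_hasDerivAt_eq_zero (hu Fin.castSucc_lt_succ)
      (fun t ht => (hf' t (hIcc ht)).continuousAt.continuousWithinAt)
      ((hzero _).trans (hzero _).symm) (fun t ht => hf' t (hIcc (Ioo_subset_Icc_self ht)))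
  choose v hv hv0 using hrolle
  refine ⟨v, fun k k' hkk' => ?_, hv, hv0⟩
  calc v k < u k.succ := (hv k).2
    _ ≤ u k'.castSucc := hu.monotone (Fin.succ_le_castSucc_iff.mpr hkk')
    _ < v k' := (hv k').1

theorem eq_zero_of_forall_sum_mul_rpow_eq_zero {n : ℕ} {α u c : Fin n → ℝ} (hα : StrictMono α)
    (hu : StrictMono u) (hu0 : ∀ j, 0 < u j) (h : ∀ j, ∑ i, c i * u j ^ α i = 0) : c = 0 := by
  induction n with
  | zero => exact funext fun i => i.elim0
  | succ m ih =>
    have hG (j) : ∑ i, c i * u j ^ (α i - α 0) = 0 := by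
      simp_rw [Real.rpow_sub (hu0 j), ← mul_div_assoc, ← Finset.sum_div, h j, zero_div]
    obtain ⟨v, hv, hvu, hv0⟩ := exists_strictMono_deriv_eq_zero hu
      (fun t ht => hasDerivAt_sum_mul_rpow c (α · - α 0) ((hu0 0).trans_le ht)) hG
    -- the derivative kills the `t ^ 0` term and lowers the remaining exponents by one
    have hd : (fun k : Fin m => c k.succ * (α k.succ - α 0)) = 0 := by
      refine ih (α := fun k => α k.succ - α 0 - 1) (u := v) (fun k k' hk => ?_) hv
        (fun k => (hu0 _).trans (hvu k).1) fun k => ?_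
      · linarith [hα (Fin.succ_lt_succ_iff.mpr hk)]
      · simpa [Fin.sum_univ_succ] using hv0 k
    have hsucc (k : Fin m) : c k.succ = 0 :=
      (mul_eq_zero.mp (congrFun hd k)).resolve_right (sub_ne_zero.mpr (hα k.succ_pos).ne')
    have h0 : c 0 = 0 := by
      simpa [Fin.sum_univ_succ, hsucc, (Real.rpow_pos_of_pos (hu0 0) _).ne'] using h 0
    exact funext fun i => Fin.cases h0 hsucc i

namespace Matrix

lemma det_vandermonde_pos {R : Type*} [CommRing R] [LinearOrder R] [IsStrictOrderedRing R]
    {n : ℕ} {x : Fin n → R} (hx : StrictMono x) : 0 < (vandermonde x).det := by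
  rw [det_vandermonde]
  exact Finset.prod_pos fun i _ => Finset.prod_pos fun j hj =>
    sub_pos.mpr (hx (Finset.mem_Ioi.mp hj))

noncomputable def rpowVandermonde {ι : Type*} (α x : ι → ℝ) : Matrix ι ι ℝ :=
  of fun i j => x j ^ α i

lemma rpowVandermonde_natCast {n : ℕ} (x : Fin n → ℝ) :
    rpowVandermonde (fun i : Fin n => ((i : ℕ) : ℝ)) x = (vandermonde x)ᵀ := by
  ext i j
  simp [rpowVandermonde, vandermonde, Real.rpow_natCast]

lemma det_rpowVandermonde_ne_zero {n : ℕ} {α x : Fin n → ℝ} (hα : StrictMono α)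
    (hx : StrictMono x) (hx0 : ∀ j, 0 < x j) : (rpowVandermonde α x).det ≠ 0 := by
  intro hdet
  obtain ⟨c, hc, hcx⟩ := exists_vecMul_eq_zero_iff.mpr hdet
  exact hc (eq_zero_of_forall_sum_mul_rpow_eq_zero hα hx hx0 fun j => congrFun hcx j)

lemma continuous_det_rpowVandermonde {ι : Type*} [Fintype ι] [DecidableEq ι]
    {α : ℝ → ι → ℝ} (hα : ∀ i, Continuous fun s => α s i) {x : ι → ℝ} (hx0 : ∀ j, 0 < x j) :
    Continuous fun s => (rpowVandermonde (α s) x).det :=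
  Continuous.matrix_det <| continuous_matrix fun i j =>
    continuous_const.rpow (hα i) fun _ => Or.inl (hx0 j).ne'

end Matrix

theorem generalized_vandermonde_det_pos (n : ℕ) (α x : Fin n → ℝ)
    (hα : StrictMono α) (hx : StrictMono x) (hxpos : ∀ j, 0 < x j) :
    0 < Matrix.det (Matrix.of fun i j : Fin n => (x j) ^ (α i)) := by
  set A : ℝ → Fin n → ℝ := fun s i => (1 - s) * α i + s * (i : ℕ)
  have hA : ∀ s ∈ Icc (0 : ℝ) 1, StrictMono (A s) := fun s hs =>
    hα.one_sub_mul_add_mul (Nat.strictMono_cast.comp Fin.val_strictMono) hs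
  set F : ℝ → ℝ := fun s => (rpowVandermonde (A s) x).det
  have hF : Continuous F := continuous_det_rpowVandermonde (fun i => by fun_prop) hxpos
  have hF1 : 0 < F 1 := by
    simpa [F, A, rpowVandermonde_natCast] using det_vandermonde_pos hx
  have hF0 : (of fun i j : Fin n => x j ^ α i).det = F 0 := by simp [F, A, rpowVandermonde]
  rw [hF0]
  by_contra! hF0_nonpos
  obtain ⟨s, hs, hFs⟩ := intermediate_value_Icc zero_le_one hF.continuousOn ⟨hF0_nonpos, hF1.le⟩
  exact det_rpowVandermonde_ne_zero (hA s hs) hx hxpos hFs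
end

section
/- Induction step for generalized Vandermonde: if for all real exponents β₂ < ... < βₙ (all positive) and 0 < y₂ < ... < yₙ the (n-1)×(n-1) determinant with entries y_j^{β_i} is positive, then for 0 < x₁ < ... < xₙ the (n-1)×(n-1) determinant with entries x_j^{β_i} - x₁^{β_i} (j = 2,...,n) is positive. -/
/-!
`D t = det (x_{j+1}^{βᵢ} - t^{βᵢ})` is continuous in `t`, and at `t = 0` it is the generalized
Vandermonde determinant of `x₁ < ⋯ < xₙ`, positive by hypothesis. For `0 < t ≤ x₀` it cannot
vanish: a kernel vector `c` would make `g z = ∑ cᵢ z^{βᵢ}` take equal values at `t, x₁, …, xₙ`,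
so by Rolle `z g'(z) = ∑ cᵢ βᵢ z^{βᵢ}` would vanish at `n` increasing positive points,
contradicting the hypothesis there. The intermediate value theorem gives `D x₀ > 0`.
-/

open Matrix

theorem exists_strictMono_hasDerivAt_eq_zero {n : ℕ} {f f' : ℝ → ℝ} {p : Fin (n + 1) → ℝ}
    (hp : StrictMono p) (hfp : ∀ j, f (p j) = f (p 0))
    (hf : ∀ z ∈ Set.Icc (p 0) (p (Fin.last n)), HasDerivAt f (f' z) z) :
    ∃ y : Fin n → ℝ, StrictMono y ∧ (∀ k, y k ∈ Set.Ioo (p k.castSucc) (p k.succ)) ∧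
      ∀ k, f' (y k) = 0 := by
  have hIcc : ∀ k : Fin n, Set.Icc (p k.castSucc) (p k.succ) ⊆ Set.Icc (p 0) (p (Fin.last n)) :=
    fun k => Set.Icc_subset_Icc (hp.monotone (Fin.zero_le _)) (hp.monotone (Fin.le_last _))
  have hroot : ∀ k : Fin n, ∃ y ∈ Set.Ioo (p k.castSucc) (p k.succ), f' y = 0 := fun k =>
    exists_hasDerivAt_eq_zero (hp Fin.castSucc_lt_succ)
      (fun z hz => (hf z (hIcc k hz)).continuousAt.continuousWithinAt)
      ((hfp _).trans (hfp _).symm)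
      (fun z hz => hf z (hIcc k (Set.Ioo_subset_Icc_self hz)))
  choose y hy hfy using hroot
  refine ⟨y, fun k l hkl => ?_, hy, hfy⟩
  calc y k < p k.succ := (hy k).2
    _ ≤ p l.castSucc := hp.monotone (Fin.succ_le_castSucc_iff.mpr hkl)
    _ < y l := (hy l).1

theorem mul_sum_mul_rpow_sub_one {ι : Type*} (s : Finset ι) (c β : ι → ℝ) {z : ℝ} (hz : 0 < z) :
    z * ∑ i ∈ s, c i * (β i * z ^ (β i - 1)) = ∑ i ∈ s, c i * β i * z ^ β i := by
  rw [Finset.mul_sum]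
  refine Finset.sum_congr rfl fun i _ => ?_
  rw [Real.rpow_sub hz, Real.rpow_one]
  field_simp

theorem vecMul_of_apply {R m n : Type*} [NonUnitalNonAssocSemiring R] [Fintype m]
    (c : m → R) (g : m → n → R) (j : n) :
    (c ᵥ* of g) j = ∑ i, c i * g i j := rfl

theorem det_rpow_sub_ne_zero {n : ℕ} {β : Fin n → ℝ}
    (hdet : ∀ y : Fin n → ℝ, (∀ j, 0 < y j) → StrictMono y → (of fun i j => y j ^ β i).det ≠ 0)
    (hβ : ∀ i, β i ≠ 0) {p : Fin (n + 1) → ℝ} (hp0 : 0 < p 0) (hp : StrictMono p) :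
    (of fun i j : Fin n => p j.succ ^ β i - p 0 ^ β i).det ≠ 0 := by
  intro h0
  obtain ⟨c, hc, hcM⟩ := exists_vecMul_eq_zero_iff.mpr h0
  have hfp : ∀ j, ∑ i, c i * p j ^ β i = ∑ i, c i * p 0 ^ β i := by
    refine Fin.cases rfl fun k => ?_
    have h := congrFun hcM k
    simp only [vecMul_of_apply, mul_sub, Finset.sum_sub_distrib, Pi.zero_apply] at h
    exact sub_eq_zero.mp h
  have hderiv : ∀ z ∈ Set.Icc (p 0) (p (Fin.last n)),
      HasDerivAt (fun z => ∑ i, c i * z ^ β i) (∑ i, c i * (β i * z ^ (β i - 1))) z :=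
    fun z hz => HasDerivAt.fun_sum fun i _ =>
      (Real.hasDerivAt_rpow_const (Or.inl (hp0.trans_le hz.1).ne')).const_mul (c i)
  obtain ⟨y, hy, hyp, hy0⟩ := exists_strictMono_hasDerivAt_eq_zero hp hfp hderiv
  have hypos : ∀ k, 0 < y k := fun k =>
    (hp0.trans_le (hp.monotone (Fin.zero_le _))).trans (hyp k).1
  refine hdet y hypos hy (exists_vecMul_eq_zero_iff.mp ⟨fun i => c i * β i, ?_, ?_⟩)
  · obtain ⟨i, hi⟩ := Function.ne_iff.mp hc
    exact Function.ne_iff.mpr ⟨i, mul_ne_zero hi (hβ i)⟩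
  · funext k
    rw [vecMul_of_apply, ← mul_sum_mul_rpow_sub_one _ _ _ (hypos k), hy0, mul_zero, Pi.zero_apply]

theorem pos_of_continuousOn_Icc_of_ne_zero {f : ℝ → ℝ} {a b : ℝ} (hab : a ≤ b)
    (hf : ContinuousOn f (Set.Icc a b)) (ha : 0 < f a) (hne : ∀ t ∈ Set.Icc a b, f t ≠ 0) :
    0 < f b := by
  by_contra! hb
  obtain ⟨s, hs, hfs⟩ := intermediate_value_Icc' hab hf ⟨hb, ha.le⟩
  exact hne s hs hfs

theorem generalized_vandermonde_induction_step (n : ℕ)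
    (ih : ∀ (β y : Fin n → ℝ), (∀ i, 0 < β i) → StrictMono β →
      (∀ j, 0 < y j) → StrictMono y →
      0 < Matrix.det (Matrix.of fun i j : Fin n => (y j) ^ (β i)))
    (β : Fin n → ℝ) (hβpos : ∀ i, 0 < β i) (hβ : StrictMono β)
    (x : Fin (n + 1) → ℝ) (hxpos : ∀ j, 0 < x j) (hx : StrictMono x) :
    0 < Matrix.det
      (Matrix.of fun i j : Fin n => (x j.succ) ^ (β i) - (x 0) ^ (β i)) := by
  set D : ℝ → ℝ := fun t => (of fun i j : Fin n => x j.succ ^ β i - t ^ β i).det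
  have hD0 : 0 < D 0 := by
    simpa [D, Real.zero_rpow (hβpos _).ne'] using
      ih β _ hβpos hβ (fun j => hxpos j.succ) (hx.comp Fin.strictMono_succ)
  have hDcont : Continuous D :=
    Continuous.matrix_det <| continuous_matrix fun i j =>
      continuous_const.sub (Real.continuous_rpow_const (hβpos i).le)
  refine pos_of_continuousOn_Icc_of_ne_zero (hxpos 0).le hDcont.continuousOn hD0 fun t ht => ?_
  rcases ht.1.eq_or_lt with rfl | ht0
  · exact hD0.ne'
  · have hcons : StrictMono (Fin.cons t fun j => x j.succ : Fin (n + 1) → ℝ) :=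
      Fin.strictMono_cons.2
        ⟨fun j => ht.2.trans_lt (hx (Fin.succ_pos j)), hx.comp Fin.strictMono_succ⟩
    simpa [D] using det_rpow_sub_ne_zero (fun y hy hym => (ih β y hβpos hβ hy hym).ne')
      (fun i => (hβpos i).ne') ht0 hcons
end

section
/- Let K : [0,T̄]² → ℝⁿ be measurable with K(T,·) ∈ L²([0,T̄];ℝⁿ) for each T, and suppose there is C > 0 and ρ ∈ (0,1] such that |K(T,s) - K(T',s)| ≤ C|T-T'|^ρ for all T,T',s ∈ [0,T̄]. Define K̄(s,T₁,T₂) = (T₂-T₁)⁻¹ ∫_{T₁}^{T₂} K(T,s) dT. Then for any T̃ ∈ [T₁,T₂] and t ∈ [0,T̄], ∫₀ᵗ |K(T̃,s) - K̄(s,T₁,T₂)|² ds ≤ (4C²T̄/(1+ρ)²) (T₂-T₁)^{2ρ}. -/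
open MeasureTheory intervalIntegral

theorem tracking_error_variance_bound (n : ℕ)
    (K : ℝ → ℝ → EuclideanSpace ℝ (Fin n)) (Tbar C ρ : ℝ)
    (hTbar : 0 < Tbar) (hC : 0 < C) (hρ0 : 0 < ρ) (hρ1 : ρ ≤ 1)
    (hHolder : ∀ T ∈ Set.Icc 0 Tbar, ∀ T' ∈ Set.Icc 0 Tbar, ∀ s ∈ Set.Icc 0 Tbar,
      ‖K T s - K T' s‖ ≤ C * |T - T'| ^ ρ)
    (T₁ T₂ : ℝ) (hT₁ : 0 ≤ T₁) (hT₁₂ : T₁ < T₂) (hT₂ : T₂ ≤ Tbar)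
    (hint : ∀ s ∈ Set.Icc 0 Tbar, IntervalIntegrable (fun T => K T s) volume T₁ T₂)
    (Ttil : ℝ) (hTtil : Ttil ∈ Set.Icc T₁ T₂)
    (t : ℝ) (ht : t ∈ Set.Icc 0 Tbar) :
    ∫ s in (0:ℝ)..t,
        ‖K Ttil s - (T₂ - T₁)⁻¹ • (∫ T in T₁..T₂, K T s)‖ ^ 2
      ≤ (4 * C ^ 2 * Tbar / (1 + ρ) ^ 2) * (T₂ - T₁) ^ (2 * ρ) := by
  have hd : (0:ℝ) < T₂ - T₁ := by linarith
  have hTt0 : Ttil ∈ Set.Icc 0 Tbar := ⟨le_trans hT₁ hTtil.1, le_trans hTtil.2 hT₂⟩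
  have hRHSpos : 0 < (4 * C ^ 2 * Tbar / (1 + ρ) ^ 2) * (T₂ - T₁) ^ (2 * ρ) := by
    have h1 : (0:ℝ) < (T₂ - T₁) ^ (2 * ρ) := Real.rpow_pos_of_pos hd _
    have h2 : (0:ℝ) < (1 + ρ) ^ 2 := by positivity
    positivity
  set M : ℝ := C ^ 2 * (T₂ - T₁) ^ (2 * ρ) with hM
  have hMval : M = (C * (T₂ - T₁) ^ ρ) ^ 2 := by
    rw [mul_pow, hM]
    congr 1
    rw [← Real.rpow_natCast ((T₂ - T₁) ^ ρ) 2, ← Real.rpow_mul hd.le]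
    norm_num [mul_comm]
  -- pointwise bound
  have key : ∀ s ∈ Set.Icc (0:ℝ) t,
      ‖K Ttil s - (T₂ - T₁)⁻¹ • (∫ T in T₁..T₂, K T s)‖ ^ 2 ≤ M := by
    intro s hs
    have hsT : s ∈ Set.Icc (0:ℝ) Tbar := ⟨hs.1, le_trans hs.2 ht.2⟩
    have heq : K Ttil s - (T₂ - T₁)⁻¹ • (∫ T in T₁..T₂, K T s)
        = (T₂ - T₁)⁻¹ • (∫ T in T₁..T₂, (K Ttil s - K T s)) := by
      rw [intervalIntegral.integral_sub intervalIntegrable_const (hint s hsT),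
        intervalIntegral.integral_const, smul_sub, smul_smul,
        inv_mul_cancel₀ hd.ne', one_smul]
    have hnorm : ‖K Ttil s - (T₂ - T₁)⁻¹ • (∫ T in T₁..T₂, K T s)‖
        ≤ C * (T₂ - T₁) ^ ρ := by
      rw [heq, norm_smul]
      have hbound : ∀ T ∈ Set.uIoc T₁ T₂, ‖K Ttil s - K T s‖ ≤ C * (T₂ - T₁) ^ ρ := by
        intro T hT
        rw [Set.uIoc_of_le hT₁₂.le] at hT
        have hT0 : T ∈ Set.Icc (0:ℝ) Tbar :=
          ⟨le_trans hT₁ hT.1.le, le_trans hT.2 hT₂⟩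
        refine le_trans (hHolder Ttil hTt0 T hT0 s hsT) ?_
        have habs : |Ttil - T| ≤ T₂ - T₁ := by
          rw [abs_le]
          constructor <;> [linarith [hTtil.1, hT.2]; linarith [hTtil.2, hT.1]]
        exact mul_le_mul_of_nonneg_left
          (Real.rpow_le_rpow (abs_nonneg _) habs hρ0.le) hC.le
      have := intervalIntegral.norm_integral_le_of_norm_le_const hbound
      calc ‖(T₂ - T₁)⁻¹‖ * ‖∫ T in T₁..T₂, (K Ttil s - K T s)‖
          ≤ ‖(T₂ - T₁)⁻¹‖ * (C * (T₂ - T₁) ^ ρ * |T₂ - T₁|) :=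
            mul_le_mul_of_nonneg_left this (norm_nonneg _)
        _ = C * (T₂ - T₁) ^ ρ := by
            rw [Real.norm_eq_abs, abs_of_pos hd, abs_inv, abs_of_pos hd]
            field_simp
    rw [hMval]
    exact pow_le_pow_left₀ (norm_nonneg _) hnorm 2
  by_cases hI : IntervalIntegrable
      (fun s => ‖K Ttil s - (T₂ - T₁)⁻¹ • (∫ T in T₁..T₂, K T s)‖ ^ 2) volume 0 t
  · have hfinal : C ^ 2 * (T₂ - T₁) ^ (2 * ρ) * Tbar
        ≤ (4 * C ^ 2 * Tbar / (1 + ρ) ^ 2) * (T₂ - T₁) ^ (2 * ρ) := by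
      have h1 : (0:ℝ) < (T₂ - T₁) ^ (2 * ρ) := Real.rpow_pos_of_pos hd _
      have h3 : (0:ℝ) < (1 + ρ) ^ 2 := by positivity
      rw [div_mul_eq_mul_div, le_div_iff₀ h3]
      have h2 : (1 + ρ) ^ 2 ≤ 4 := by nlinarith
      have h4 : C ^ 2 * Tbar * ((1 + ρ) ^ 2) ≤ C ^ 2 * Tbar * 4 :=
        mul_le_mul_of_nonneg_left h2 (by positivity)
      nlinarith [mul_le_mul_of_nonneg_right h4 h1.le]
    calc ∫ s in (0:ℝ)..t, ‖K Ttil s - (T₂ - T₁)⁻¹ • (∫ T in T₁..T₂, K T s)‖ ^ 2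
        ≤ ∫ _ in (0:ℝ)..t, M :=
          intervalIntegral.integral_mono_on ht.1 hI intervalIntegrable_const key
      _ = (t - 0) • M := intervalIntegral.integral_const M
      _ = t * M := by simp [smul_eq_mul]
      _ ≤ Tbar * M := by
          apply mul_le_mul_of_nonneg_right ht.2
          have h1 : (0:ℝ) < (T₂ - T₁) ^ (2 * ρ) := Real.rpow_pos_of_pos hd _
          rw [hM]; positivity
      _ = C ^ 2 * (T₂ - T₁) ^ (2 * ρ) * Tbar := by rw [hM]; ring
      _ ≤ _ := hfinal
  · rw [intervalIntegral.integral_undef hI]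
    exact hRHSpos.le
end

section
/- Fix s > 0, H ∈ (1/2,1), α₁ ≤ α₂, and s < T₁ < T₂. Then e^{(α₁-α₂)T₁}/e^{(α₁-α₂)T₂} ≥ 1 > (∫ₛ^{T₁} e^{-α₂u} φ_H(u,s) du)/(∫ₛ^{T₂} e^{-α₂u} φ_H(u,s) du), where φ_H(u,s) = u^{H-1/2}(u-s)^{H-3/2}; consequently the 2×2 determinant with rows (e^{α₁(T_j - s)}, s^{1/2-H}∫ₛ^{T_j} e^{α₂(T_j-u)} φ_H(u,s) du), j=1,2, is nonzero. -/
/-!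
The second-column entries are `s^{1/2-H} e^{α₂ T_j}` times the integral of the strictly positive
weight `e^{-α₂ u} φ_H(u, s)` over `[s, T_j]` (integrable since `H - 3/2 > -1`). The determinant
therefore vanishes iff `e^{(α₁-α₂)T₁} / e^{(α₁-α₂)T₂}` equals the ratio of these weight integrals;
the first ratio is at least `1` because `α₁ ≤ α₂`, the second is below `1` because `T₁ < T₂`.
-/

open MeasureTheory intervalIntegral Real Set

lemma intervalIntegrable_sub_rpow_mul {g : ℝ → ℝ} {s T r : ℝ} (hr : -1 < r)
    (hg : ContinuousOn g (uIcc s T)) :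
    IntervalIntegrable (fun u => (u - s) ^ r * g u) volume s T := by
  have h : IntervalIntegrable (fun u : ℝ => (u - s) ^ r) volume s T := by
    simpa using (intervalIntegrable_rpow' (a := 0) (b := T - s) hr).comp_sub_right s
  exact h.mul_continuousOn hg

lemma intervalIntegral_lt_of_pos_on {f : ℝ → ℝ} {a b c : ℝ}
    (hf : IntervalIntegrable f volume a c) (hpos : ∀ x ∈ Ioo a c, 0 < f x)
    (hab : a < b) (hbc : b < c) :
    ∫ x in a..b, f x < ∫ x in a..c, f x := by
  have hfab : IntervalIntegrable f volume a b :=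
    hf.mono_set (uIcc_subset_uIcc_left (by simp [uIcc_of_lt (hab.trans hbc), hab.le, hbc.le]))
  have hfbc : IntervalIntegrable f volume b c := hfab.symm.trans hf
  have htail : 0 < ∫ x in b..c, f x :=
    intervalIntegral_pos_of_pos_on hfbc (fun x hx => hpos x ⟨hab.trans hx.1, hx.2⟩) hbc
  rw [← integral_add_adjacent_intervals hfab hfbc]
  linarith

lemma integral_exp_mul_sub_mul (α T a b : ℝ) (φ : ℝ → ℝ) :
    ∫ u in a..b, exp (α * (T - u)) * φ u = exp (α * T) * ∫ u in a..b, exp (-α * u) * φ u := by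
  rw [← intervalIntegral.integral_const_mul]
  refine integral_congr fun u _ => ?_
  rw [← mul_assoc, ← exp_add]
  ring_nf

lemma exp_mul_sub_exp_mul_pos {α₁ α₂ s T₁ T₂ c J₁ J₂ : ℝ} (hc : 0 < c) (hJ₂ : 0 < J₂)
    (hexp : exp ((α₁ - α₂) * T₂) ≤ exp ((α₁ - α₂) * T₁)) (hJ : J₁ < J₂) :
    0 < exp (α₁ * (T₁ - s)) * (c * (exp (α₂ * T₂) * J₂))
      - exp (α₁ * (T₂ - s)) * (c * (exp (α₂ * T₁) * J₁)) := by
  have hsplit : ∀ T, exp (α₁ * (T - s)) = exp ((α₁ - α₂) * T) * exp (α₂ * T) * exp (-α₁ * s) :=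
    fun T => by rw [← exp_add, ← exp_add]; ring_nf
  have hk : 0 < c * exp (α₂ * T₁) * exp (α₂ * T₂) * exp (-α₁ * s) := by positivity
  have hdet : 0 < exp ((α₁ - α₂) * T₁) * J₂ - exp ((α₁ - α₂) * T₂) * J₁ := by
    nlinarith [exp_pos ((α₁ - α₂) * T₂)]
  rw [hsplit T₁, hsplit T₂]
  linear_combination (c * exp (α₂ * T₁) * exp (α₂ * T₂) * exp (-α₁ * s)) * hdet

theorem mixed_OU_fOU_determinant_nonzero_general (H α₁ α₂ s T₁ T₂ : ℝ)
    (hH₁ : 1/2 < H) (hs : 0 < s)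
    (hα : α₁ ≤ α₂) (hT₁ : s < T₁) (hT : T₁ < T₂)
    (φ : ℝ → ℝ)
    (hφ : ∀ u, φ u = u ^ (H - 1/2) * (u - s) ^ (H - 3/2)) :
    (exp ((α₁ - α₂) * T₁) / exp ((α₁ - α₂) * T₂) ≥ 1) ∧
    (1 > (∫ u in s..T₁, exp (-α₂ * u) * φ u) / ∫ u in s..T₂, exp (-α₂ * u) * φ u) ∧
    (exp (α₁ * (T₁ - s)) * (s ^ ((1:ℝ)/2 - H) * ∫ u in s..T₂, exp (α₂ * (T₂ - u)) * φ u)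
      - exp (α₁ * (T₂ - s)) * (s ^ ((1:ℝ)/2 - H) * ∫ u in s..T₁, exp (α₂ * (T₁ - u)) * φ u)
      ≠ 0) := by
  have hsT₂ : s < T₂ := hT₁.trans hT
  have hpos : ∀ u ∈ Ioo s T₂, 0 < exp (-α₂ * u) * φ u := fun u hu => by
    rw [hφ]
    have := hs.trans hu.1
    have := sub_pos.mpr hu.1
    positivity
  have hint : IntervalIntegrable (fun u => exp (-α₂ * u) * φ u) volume s T₂ := by
    have hcont : ContinuousOn (fun u => exp (-α₂ * u) * u ^ (H - 1/2)) (uIcc s T₂) := by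
      rw [uIcc_of_lt hsT₂]
      exact ContinuousOn.mul (by fun_prop)
        (continuousOn_id.rpow_const fun u hu => Or.inl (hs.trans_le hu.1).ne')
    refine (intervalIntegrable_sub_rpow_mul (r := H - 3/2) (by linarith) hcont).congr fun u _ => ?_
    simp only [hφ]
    ring
  have hJ₂ := intervalIntegral_pos_of_pos_on hint hpos hsT₂
  have hJ := intervalIntegral_lt_of_pos_on hint hpos hT₁ hT
  have hexp : exp ((α₁ - α₂) * T₂) ≤ exp ((α₁ - α₂) * T₁) := exp_le_exp.mpr (by nlinarith)
  refine ⟨(one_le_div (exp_pos _)).mpr hexp, (div_lt_one hJ₂).mpr hJ, ?_⟩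
  rw [integral_exp_mul_sub_mul, integral_exp_mul_sub_mul]
  exact (exp_mul_sub_exp_mul_pos (rpow_pos_of_pos hs _) hJ₂ hexp hJ).ne'

theorem mixed_OU_fOU_determinant_nonzero (H α₁ α₂ s T₁ T₂ : ℝ)
    (hH₁ : 1/2 < H) (hH₂ : H < 1) (hs : 0 < s)
    (hα : α₁ ≤ α₂) (hT₁ : s < T₁) (hT : T₁ < T₂)
    (φ : ℝ → ℝ)
    (hφ : ∀ u, φ u = u ^ (H - 1/2) * (u - s) ^ (H - 3/2)) :
    (exp ((α₁ - α₂) * T₁) / exp ((α₁ - α₂) * T₂) ≥ 1) ∧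
    (1 > (∫ u in s..T₁, exp (-α₂ * u) * φ u) / ∫ u in s..T₂, exp (-α₂ * u) * φ u) ∧
    (exp (α₁ * (T₁ - s)) * (s ^ ((1:ℝ)/2 - H) * ∫ u in s..T₂, exp (α₂ * (T₂ - u)) * φ u)
      - exp (α₁ * (T₂ - s)) * (s ^ ((1:ℝ)/2 - H) * ∫ u in s..T₁, exp (α₂ * (T₁ - u)) * φ u)
      ≠ 0) :=
  mixed_OU_fOU_determinant_nonzero_general H α₁ α₂ s T₁ T₂ hH₁ hs hα hT₁ hT φ hφ
end

section
/- Let F be a real random variable with F ~ N(μ, σ²) under a probability measure Q, with σ > 0, and let K ∈ ℝ. Then E_Q[(F - K)⁺] = σ(d·N(d) + n(d)) = (μ - K)·N(d) + σ·n(d), where d = (μ - K)/σ, n is the standard normal density and N the standard normal CDF. -/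
/-
Writing `d = (m - K) / σ`, the variable `Z = (F - m) / σ` is standard normal and
`(F - K)⁺ = σ (Z + d)⁺`, so it suffices to compute `E (Z + d)⁺ = ∫_{-d}^∞ (y + d) n(y) dy`.
Since `n' = -y n`, the first part integrates to `n(-d) = n(d)`; by the symmetry of `n`,
the second is `d N(d)`.
-/

open MeasureTheory ProbabilityTheory Real

noncomputable def stdNormalPdf (x : ℝ) : ℝ := (Real.sqrt (2 * π))⁻¹ * exp (-x ^ 2 / 2)

noncomputable def stdNormalCdf (y : ℝ) : ℝ := ∫ x in Set.Iic y, stdNormalPdf x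

open Filter Set Topology

lemma stdNormalPdf_eq_gaussianPDFReal : stdNormalPdf = gaussianPDFReal 0 1 := by
  ext x
  simp [stdNormalPdf, gaussianPDFReal]

lemma stdNormalPdf_neg (x : ℝ) : stdNormalPdf (-x) = stdNormalPdf x := by
  simp [stdNormalPdf]

lemma integrable_stdNormalPdf : Integrable stdNormalPdf := by
  rw [stdNormalPdf_eq_gaussianPDFReal]
  exact integrable_gaussianPDFReal 0 1

lemma integrable_mul_stdNormalPdf : Integrable fun x ↦ x * stdNormalPdf x := by
  have h := (integrable_mul_exp_neg_mul_sq (by norm_num : (0:ℝ) < 1 / 2)).const_mul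
    (Real.sqrt (2 * π))⁻¹
  refine h.congr (ae_of_all _ fun x ↦ ?_)
  simp only [stdNormalPdf]
  ring_nf

lemma hasDerivAt_stdNormalPdf (x : ℝ) :
    HasDerivAt stdNormalPdf (-(x * stdNormalPdf x)) x := by
  have hexp : HasDerivAt (fun y : ℝ ↦ -y ^ 2 / 2) (-x) x :=
    ((hasDerivAt_pow 2 x).neg.div_const 2).congr_deriv (by norm_num; ring)
  exact (hexp.exp.const_mul _).congr_deriv (by simp only [stdNormalPdf]; ring)

lemma tendsto_stdNormalPdf_atTop : Tendsto stdNormalPdf atTop (𝓝 0) := by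
  unfold stdNormalPdf
  have h : Tendsto (fun x : ℝ ↦ -x ^ 2 / 2) atTop atBot :=
    (tendsto_neg_atTop_atBot.comp (tendsto_pow_atTop two_ne_zero)).atBot_div_const two_pos
  simpa only [mul_zero, Function.comp_def] using
    (tendsto_exp_atBot.comp h).const_mul (Real.sqrt (2 * π))⁻¹

lemma integral_Ioi_mul_stdNormalPdf (c : ℝ) :
    ∫ x in Ioi c, x * stdNormalPdf x = stdNormalPdf c := by
  rw [integral_Ioi_of_hasDerivAt_of_tendsto' (f := -stdNormalPdf) (m := 0)
    (fun x _ ↦ by simpa only [neg_neg] using (hasDerivAt_stdNormalPdf x).neg)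
    integrable_mul_stdNormalPdf.integrableOn
    (by rw [← neg_zero]; exact tendsto_stdNormalPdf_atTop.neg)]
  simp

lemma integral_Ioi_stdNormalPdf (c : ℝ) :
    ∫ x in Ioi c, stdNormalPdf x = stdNormalCdf (-c) := by
  rw [stdNormalCdf, ← integral_comp_neg_Ioi]
  simp only [stdNormalPdf_neg]

lemma integral_max_add_gaussianReal_zero_one (d : ℝ) :
    ∫ y, max (y + d) 0 ∂gaussianReal 0 1 = d * stdNormalCdf d + stdNormalPdf d := by
  have h : (fun y ↦ gaussianPDFReal 0 1 y • max (y + d) 0)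
      = (Ioi (-d)).indicator fun y ↦ y * stdNormalPdf y + d * stdNormalPdf y := by
    ext y
    rw [← stdNormalPdf_eq_gaussianPDFReal, smul_eq_mul]
    by_cases hy : -d < y
    · rw [indicator_of_mem (mem_Ioi.2 hy), max_eq_left (by linarith)]; ring
    · rw [indicator_of_notMem (notMem_Ioi.2 (not_lt.1 hy)), max_eq_right (by linarith),
        mul_zero]
  rw [integral_gaussianReal_eq_integral_smul one_ne_zero, h, integral_indicator measurableSet_Ioi,
    integral_add integrable_mul_stdNormalPdf.integrableOn
      (integrable_stdNormalPdf.const_mul d).integrableOn,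
    integral_const_mul, integral_Ioi_mul_stdNormalPdf, integral_Ioi_stdNormalPdf, neg_neg,
    stdNormalPdf_neg]
  ring

lemma gaussianReal_map_sub_div (m : ℝ) {σ : ℝ} (hσ : 0 < σ) :
    (gaussianReal m (σ ^ 2).toNNReal).map (fun x ↦ (x - m) / σ) = gaussianReal 0 1 := by
  have h : (fun x ↦ (x - m) / σ) = (· / σ) ∘ (· - m) := rfl
  rw [h, ← Measure.map_map (by fun_prop) (by fun_prop), gaussianReal_map_sub_const,
    gaussianReal_map_div_const, sub_self, zero_div]
  congr
  ext
  simp [hσ.ne', (sq_pos_of_pos hσ).le]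

lemma integral_max_sub_gaussianReal (m K : ℝ) {σ : ℝ} (hσ : 0 < σ) :
    ∫ x, max (x - K) 0 ∂gaussianReal m (σ ^ 2).toNNReal
      = σ * ((m - K) / σ * stdNormalCdf ((m - K) / σ) + stdNormalPdf ((m - K) / σ)) := by
  have h : ∀ x, max (x - K) 0 = σ * max ((x - m) / σ + (m - K) / σ) 0 := fun x ↦ by
    rw [mul_max_of_nonneg _ _ hσ.le, mul_zero, ← add_div, mul_div_cancel₀ _ hσ.ne',
      sub_add_sub_cancel]
  simp_rw [h]
  rw [integral_const_mul, ← integral_map (f := fun y ↦ max (y + (m - K) / σ) 0) (by fun_prop)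
    (by fun_prop), gaussianReal_map_sub_div m hσ, integral_max_add_gaussianReal_zero_one]

theorem bachelier_call_price_general {Ω : Type*} [MeasurableSpace Ω]
    (Q : Measure Ω)
    (F : Ω → ℝ) (hF : Measurable F)
    (m σ K : ℝ) (hσ : 0 < σ)
    (hlaw : Q.map F = gaussianReal m ((σ ^ 2).toNNReal)) :
    (∫ ω, max (F ω - K) 0 ∂Q)
        = σ * ((m - K) / σ * stdNormalCdf ((m - K) / σ) + stdNormalPdf ((m - K) / σ)) ∧
    (∫ ω, max (F ω - K) 0 ∂Q)
        = (m - K) * stdNormalCdf ((m - K) / σ) + σ * stdNormalPdf ((m - K) / σ) := by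
  have h : ∫ ω, max (F ω - K) 0 ∂Q
      = σ * ((m - K) / σ * stdNormalCdf ((m - K) / σ) + stdNormalPdf ((m - K) / σ)) := by
    rw [← integral_max_sub_gaussianReal m K hσ, ← hlaw,
      integral_map hF.aemeasurable (by fun_prop)]
  refine ⟨h, h.trans ?_⟩
  rw [mul_add, ← mul_assoc, mul_div_cancel₀ _ hσ.ne']

theorem bachelier_call_price {Ω : Type*} [MeasurableSpace Ω]
    (Q : Measure Ω) [IsProbabilityMeasure Q]
    (F : Ω → ℝ) (hF : Measurable F)
    (m σ K : ℝ) (hσ : 0 < σ)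
    (hlaw : Q.map F = gaussianReal m ((σ ^ 2).toNNReal)) :
    (∫ ω, max (F ω - K) 0 ∂Q)
        = σ * ((m - K) / σ * stdNormalCdf ((m - K) / σ) + stdNormalPdf ((m - K) / σ)) ∧
    (∫ ω, max (F ω - K) 0 ∂Q)
        = (m - K) * stdNormalCdf ((m - K) / σ) + σ * stdNormalPdf ((m - K) / σ) :=
  bachelier_call_price_general Q F hF m σ K hσ hlaw
end

section
/- Let 0 < H₁ < H₂ < 1/2 and f(R) = K_{H₁}(R)/K_{H₂}(R) for R > 1, where K_H(r) = r^{H-1/2}(r-1)^{H-1/2} + (1/2-H)∫₁^r v^{H-3/2}(v-1)^{H-1/2}dv. Then f(R) → +∞ as R ↓ 1 and f(R) converges to the finite limit f_∞ = ((1/2-H₁)/(1/2-H₂)) · (∫₁^∞ v^{H₁-3/2}(v-1)^{H₁-1/2}dv)/(∫₁^∞ v^{H₂-3/2}(v-1)^{H₂-1/2}dv) as R → +∞. -/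
/-!
Write `K_H(r) = (r(r-1))^(H-1/2) + (1/2-H) I_H(r)` with `I_H(r) = ∫₁^r v^(H-3/2) (v-1)^(H-1/2) dv`.
The integrand is integrable on `(1, ∞)`: it behaves like `(v-1)^(H-1/2)` at `1` and like
`v^(2H-2)` at `∞`. Hence as `r → ∞` the power term vanishes and `K_H(r) → (1/2-H) I_H(∞) > 0`.
As `r ↓ 1`, the bound `K_{H₁} ≥ (r(r-1))^(H₁-1/2)` gives
`0 < K_{H₂}/K_{H₁} ≤ (r(r-1))^(H₂-H₁) + (1/2-H₂) I_{H₂}(r) (r(r-1))^(1/2-H₁)`,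
and both terms tend to `0` because `I_{H₂}(r) → 0` and `(r(r-1))^(H₁-1/2) → ∞`.
-/

open MeasureTheory intervalIntegral Real Filter Set Topology Asymptotics

section PowerWeight

variable {a b p : ℝ}

lemma continuousOn_rpow_mul_sub_one_rpow (a b : ℝ) :
    ContinuousOn (fun v : ℝ => v ^ a * (v - 1) ^ b) (Ioi 1) := by
  intro v (hv : 1 < v)
  have hpow := continuousAt_id.rpow_const (p := a) (.inl (by positivity))
  have hshift := (continuousAt_id.sub continuousAt_const).rpow_const (p := b)
    (.inl (sub_ne_zero.2 hv.ne'))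
  exact (hpow.mul hshift).continuousWithinAt

lemma rpow_mul_sub_one_rpow_pos {r : ℝ} (hr : 1 < r) : 0 < r ^ a * (r - 1) ^ b :=
  mul_pos (rpow_pos_of_pos (by linarith) _) (rpow_pos_of_pos (sub_pos.2 hr) _)

lemma intervalIntegrable_rpow_mul_sub_one_rpow (a : ℝ) (hb : -1 < b) {r : ℝ} (hr : 0 < r) :
    IntervalIntegrable (fun v : ℝ => v ^ a * (v - 1) ^ b) volume 1 r := by
  have hshift : IntervalIntegrable (fun v : ℝ => (v - 1) ^ b) volume 1 r := by
    simpa using (intervalIntegrable_rpow' (a := 0) (b := r - 1) hb).comp_sub_right 1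
  refine hshift.continuousOn_mul fun v hv => ?_
  have : 0 < v := lt_of_lt_of_le (lt_min one_pos hr) hv.1
  exact (continuousAt_id.rpow_const (.inl this.ne')).continuousWithinAt

lemma rpow_mul_sub_one_rpow_isTheta_atTop (a b : ℝ) :
    (fun v : ℝ => v ^ a * (v - 1) ^ b) =Θ[atTop] fun v => v ^ (a + b) := by
  have hequiv : (fun v : ℝ => v - 1) ~[atTop] id :=
    (IsEquivalent.refl).sub_isLittleO (isLittleO_const_id_atTop 1)
  have hΘ := (isTheta_refl (fun v : ℝ => v ^ a) atTop).mul
    (hequiv.isTheta.rpow (r := b) (eventually_ge_atTop 1 |>.mono fun _ hv => sub_nonneg.2 hv)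
      (eventually_ge_atTop 0))
  refine hΘ.trans_eventuallyEq ?_
  filter_upwards [eventually_gt_atTop 0] with v hv
  simp [rpow_add hv]

lemma integrableOn_Ioi_one_rpow_mul_sub_one_rpow (hb : -1 < b) (hab : a + b < -1) :
    IntegrableOn (fun v : ℝ => v ^ a * (v - 1) ^ b) (Ioi 1) := by
  rw [integrableOn_Ioi_iff_integrableAtFilter_atTop_nhdsWithin]
  refine ⟨?_, ⟨Ioc 1 2, Ioc_mem_nhdsGT one_lt_two, ?_⟩,
    (continuousOn_rpow_mul_sub_one_rpow a b).locallyIntegrableOn measurableSet_Ioi⟩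
  · exact (rpow_mul_sub_one_rpow_isTheta_atTop a b).isBigO.integrableAtFilter
      ⟨Ioi 1, Ioi_mem_atTop 1,
        (continuousOn_rpow_mul_sub_one_rpow a b).aestronglyMeasurable measurableSet_Ioi⟩
      (integrableAtFilter_rpow_atTop_iff.2 hab)
  · exact (intervalIntegrable_iff_integrableOn_Ioc_of_le one_le_two).1
      (intervalIntegrable_rpow_mul_sub_one_rpow a hb two_pos)

lemma integral_Ioi_one_rpow_mul_sub_one_rpow_pos (hb : -1 < b) (hab : a + b < -1) :
    0 < ∫ v in Ioi (1 : ℝ), v ^ a * (v - 1) ^ b := by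
  rw [setIntegral_pos_iff_support_of_nonneg_ae
    ((ae_restrict_iff' measurableSet_Ioi).2 (ae_of_all _ fun v hv =>
      (rpow_mul_sub_one_rpow_pos hv).le))
    (integrableOn_Ioi_one_rpow_mul_sub_one_rpow hb hab)]
  have : Ioi (1 : ℝ) ⊆ Function.support (fun v : ℝ => v ^ a * (v - 1) ^ b) ∩ Ioi 1 :=
    fun v hv => ⟨(rpow_mul_sub_one_rpow_pos hv).ne', hv⟩
  exact (by simp : (0 : ENNReal) < volume (Ioi (1 : ℝ))).trans_le (measure_mono this)

lemma tendsto_mul_sub_one_nhdsGT_one :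
    Tendsto (fun r : ℝ => r * (r - 1)) (𝓝[>] 1) (𝓝[>] 0) := by
  refine tendsto_nhdsWithin_of_tendsto_nhds_of_eventually_within _ ?_ ?_
  · have h : Tendsto (fun r : ℝ => r * (r - 1)) (𝓝 1) (𝓝 (1 * (1 - 1))) :=
      (continuous_id.mul (continuous_sub_right 1)).tendsto 1
    simpa using h.mono_left nhdsWithin_le_nhds
  · filter_upwards [self_mem_nhdsWithin] with r (hr : 1 < r)
    exact mul_pos (by linarith) (sub_pos.2 hr)

lemma rpow_mul_sub_one_rpow_eventuallyEq {l : Filter ℝ} (hl : ∀ᶠ r in l, 1 ≤ r) (p : ℝ) :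
    (fun r : ℝ => (r * (r - 1)) ^ p) =ᶠ[l] fun r => r ^ p * (r - 1) ^ p := by
  filter_upwards [hl] with r hr
  exact mul_rpow (by linarith) (by linarith)

lemma tendsto_rpow_mul_sub_one_rpow_nhdsGT_one_atTop (hp : p < 0) :
    Tendsto (fun r : ℝ => r ^ p * (r - 1) ^ p) (𝓝[>] 1) atTop :=
  ((tendsto_rpow_neg_nhdsGT_zero hp).comp tendsto_mul_sub_one_nhdsGT_one).congr'
    (rpow_mul_sub_one_rpow_eventuallyEq (eventually_nhdsWithin_of_forall fun _ h => le_of_lt h) p)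

lemma tendsto_rpow_mul_sub_one_rpow_nhdsGT_one_zero (hp : 0 < p) :
    Tendsto (fun r : ℝ => r ^ p * (r - 1) ^ p) (𝓝[>] 1) (𝓝 0) := by
  have h := (tendsto_nhdsWithin_iff.1 tendsto_mul_sub_one_nhdsGT_one).1.rpow_const (.inr hp.le)
  rw [zero_rpow hp.ne'] at h
  exact h.congr'
    (rpow_mul_sub_one_rpow_eventuallyEq (eventually_nhdsWithin_of_forall fun _ h => le_of_lt h) p)

lemma tendsto_rpow_mul_sub_one_rpow_atTop_zero (hp : p < 0) :
    Tendsto (fun r : ℝ => r ^ p * (r - 1) ^ p) atTop (𝓝 0) := by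
  have hu : Tendsto (fun r : ℝ => r * (r - 1)) atTop atTop :=
    tendsto_id.atTop_mul_atTop₀ (tendsto_atTop_add_const_right _ (-1) tendsto_id)
  have h : Tendsto (fun r : ℝ => (r * (r - 1)) ^ p) atTop (𝓝 0) := by
    simpa [Function.comp_def] using (tendsto_rpow_neg_atTop (neg_pos.2 hp)).comp hu
  exact h.congr' (rpow_mul_sub_one_rpow_eventuallyEq (eventually_ge_atTop 1) p)

end PowerWeight

lemma tendsto_intervalIntegral_left_nhdsGT {E : Type*} [NormedAddCommGroup E] [NormedSpace ℝ E]
    {f : ℝ → E} {a b : ℝ} (hab : a < b) (hf : IntervalIntegrable f volume a b) :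
    Tendsto (fun r => ∫ x in a..r, f x) (𝓝[>] a) (𝓝 0) := by
  have h := (continuousOn_primitive_interval' hf left_mem_uIcc a left_mem_uIcc).tendsto
  rw [integral_same, uIcc_of_le hab.le] at h
  exact h.mono_left (nhdsWithin_le_of_mem (Icc_mem_nhdsGT hab))

noncomputable def molchanGolosovKernel (H r : ℝ) : ℝ :=
  r ^ (H - 1/2) * (r - 1) ^ (H - 1/2)
    + (1/2 - H) * ∫ v in (1:ℝ)..r, v ^ (H - 3/2) * (v - 1) ^ (H - 1/2)

section MolchanGolosovKernel

variable {H H₁ H₂ r : ℝ}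

lemma rpow_mul_sub_one_rpow_le_molchanGolosovKernel (hH : H ≤ 1/2) (hr : 1 ≤ r) :
    r ^ (H - 1/2) * (r - 1) ^ (H - 1/2) ≤ molchanGolosovKernel H r := by
  have hI : 0 ≤ ∫ v in (1:ℝ)..r, v ^ (H - 3/2) * (v - 1) ^ (H - 1/2) :=
    integral_nonneg hr fun v hv =>
      mul_nonneg (rpow_nonneg (by linarith [hv.1]) _) (rpow_nonneg (by linarith [hv.1]) _)
  exact le_add_of_nonneg_right (mul_nonneg (sub_nonneg.2 hH) hI)

lemma molchanGolosovKernel_pos (hH : H ≤ 1/2) (hr : 1 < r) : 0 < molchanGolosovKernel H r :=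
  (rpow_mul_sub_one_rpow_pos hr).trans_le (rpow_mul_sub_one_rpow_le_molchanGolosovKernel hH hr.le)

lemma tendsto_molchanGolosovKernel_atTop (h0 : -1/2 < H) (h1 : H < 1/2) :
    Tendsto (molchanGolosovKernel H) atTop
      (𝓝 ((1/2 - H) * ∫ v in Ioi (1:ℝ), v ^ (H - 3/2) * (v - 1) ^ (H - 1/2))) := by
  have hint := integrableOn_Ioi_one_rpow_mul_sub_one_rpow (a := H - 3/2) (b := H - 1/2)
    (by linarith) (by linarith)
  have h := (tendsto_rpow_mul_sub_one_rpow_atTop_zero (p := H - 1/2) (by linarith)).add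
    ((intervalIntegral_tendsto_integral_Ioi 1 hint tendsto_id).const_mul (1/2 - H))
  rwa [zero_add] at h

lemma tendsto_molchanGolosovKernel_div_rpow_mul_sub_one_rpow_nhdsGT_one (hH : H₁ < H₂)
    (h0 : -1/2 < H₂) (h1 : H₁ < 1/2) :
    Tendsto (fun r => molchanGolosovKernel H₂ r / (r ^ (H₁ - 1/2) * (r - 1) ^ (H₁ - 1/2)))
      (𝓝[>] 1) (𝓝 0) := by
  have hA := tendsto_rpow_mul_sub_one_rpow_nhdsGT_one_atTop (p := H₁ - 1/2) (by linarith)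
  have hratio := tendsto_rpow_mul_sub_one_rpow_nhdsGT_one_zero (p := H₂ - H₁) (by linarith)
  have hI := tendsto_intervalIntegral_left_nhdsGT one_lt_two
    (intervalIntegrable_rpow_mul_sub_one_rpow (H₂ - 3/2) (b := H₂ - 1/2) (by linarith) two_pos)
  have h := hratio.add ((hI.const_mul (1/2 - H₂)).mul hA.inv_tendsto_atTop)
  rw [mul_zero, add_zero] at h
  refine h.congr' ?_
  filter_upwards [self_mem_nhdsWithin] with r (hr : 1 < r)
  rw [Pi.inv_apply, molchanGolosovKernel, add_div, mul_div_mul_comm, ← rpow_sub (by linarith),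
    ← rpow_sub (sub_pos.2 hr), sub_sub_sub_cancel_right, div_eq_mul_inv _ (_ * _)]

lemma tendsto_molchanGolosovKernel_div_nhdsGT_one_atTop (hH : H₁ < H₂) (h0 : -1/2 < H₂)
    (h1 : H₂ ≤ 1/2) :
    Tendsto (fun r => molchanGolosovKernel H₁ r / molchanGolosovKernel H₂ r) (𝓝[>] 1) atTop := by
  have hinv : Tendsto (fun r => molchanGolosovKernel H₂ r / (r ^ (H₁ - 1/2) * (r - 1) ^ (H₁ - 1/2)))
      (𝓝[>] 1) (𝓝[>] 0) := by
    refine tendsto_nhdsWithin_of_tendsto_nhds_of_eventually_within _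
      (tendsto_molchanGolosovKernel_div_rpow_mul_sub_one_rpow_nhdsGT_one hH h0 (by linarith)) ?_
    filter_upwards [self_mem_nhdsWithin] with r (hr : 1 < r)
    exact div_pos (molchanGolosovKernel_pos h1 hr) (rpow_mul_sub_one_rpow_pos hr)
  refine tendsto_atTop_mono' _ ?_ hinv.inv_tendsto_nhdsGT_zero
  filter_upwards [self_mem_nhdsWithin] with r (hr : 1 < r)
  rw [Pi.inv_apply, inv_div]
  exact div_le_div_of_nonneg_right
    (rpow_mul_sub_one_rpow_le_molchanGolosovKernel (by linarith) hr.le)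
    (molchanGolosovKernel_pos h1 hr).le

end MolchanGolosovKernel

theorem MolchanGolosov_ratio_limits (H₁ H₂ : ℝ)
    (hH₁ : 0 < H₁) (hH : H₁ < H₂) (hH₂ : H₂ < 1/2)
    (K : ℝ → ℝ → ℝ)
    (hK : ∀ H r, K H r = r ^ (H - 1/2) * (r - 1) ^ (H - 1/2)
        + (1/2 - H) * ∫ v in (1:ℝ)..r, v ^ (H - 3/2) * (v - 1) ^ (H - 1/2))
    (f : ℝ → ℝ) (hf : ∀ R, f R = K H₁ R / K H₂ R) :
    Tendsto f (nhdsWithin 1 (Set.Ioi 1)) atTop ∧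
    Tendsto f atTop (nhds
      (((1/2 - H₁) / (1/2 - H₂)) *
        ((∫ v in Set.Ioi (1:ℝ), v ^ (H₁ - 3/2) * (v - 1) ^ (H₁ - 1/2)) /
          ∫ v in Set.Ioi (1:ℝ), v ^ (H₂ - 3/2) * (v - 1) ^ (H₂ - 1/2)))) := by
  obtain rfl : K = molchanGolosovKernel := funext₂ hK
  obtain rfl : f = fun R => molchanGolosovKernel H₁ R / molchanGolosovKernel H₂ R := funext hf
  refine ⟨tendsto_molchanGolosovKernel_div_nhdsGT_one_atTop hH (by linarith) hH₂.le, ?_⟩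
  have hlim₂_ne : (1/2 - H₂) * ∫ v in Ioi (1:ℝ), v ^ (H₂ - 3/2) * (v - 1) ^ (H₂ - 1/2) ≠ 0 :=
    (mul_pos (by linarith)
      (integral_Ioi_one_rpow_mul_sub_one_rpow_pos (by linarith) (by linarith))).ne'
  rw [div_mul_div_comm]
  exact (tendsto_molchanGolosovKernel_atTop (by linarith) (by linarith)).div
    (tendsto_molchanGolosovKernel_atTop (by linarith) hH₂) hlim₂_ne
end
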